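/- arXiv:2501.06079 — 5 statements merged into one kernel-verified Lean document; each statement's English description precedes it below -/
import Mathlib

section
/- If a set-valued function f : X → 𝒫(Z) is K-e-convex, then for every x ∈ X the set f(x)+K is an e-convex subset of Z. -/
open scoped Classical Pointwise
noncomputable section

variable {X : Type*} [AddCommGroup X] [Module ℝ X] [TopologicalSpace X]
  [IsTopologicalAddGroup X] [ContinuousSMul ℝ X]
variable {Z : Type*} [AddCommGroup Z] [Module ℝ Z] [TopologicalSpace Z]
  [IsTopologicalAddGroup Z] [ContinuousSMul ℝ Z]

/-- A set is evenly convex (e-convex) if it is the intersection of an arbitrary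
(possibly empty) family of open half-spaces. -/
def IsEConvex {Y : Type*} [AddCommGroup Y] [Module ℝ Y] [TopologicalSpace Y]
    (C : Set Y) : Prop :=
  ∃ S : Set ((Y →L[ℝ] ℝ) × ℝ), C = ⋂ p ∈ S, {y | p.1 y < p.2}

/-- The evenly convex hull of `C`: the smallest e-convex set containing `C`. -/
def eco {Y : Type*} [AddCommGroup Y] [Module ℝ Y] [TopologicalSpace Y]
    (C : Set Y) : Set Y :=
  ⋂₀ {D : Set Y | IsEConvex D ∧ C ⊆ D}

/-- The negative polar cone of `K`. -/
def negPolar (K : Set Z) : Set (Z →L[ℝ] ℝ) := {z' | ∀ z ∈ K, z' z ≤ 0}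

/-- `S_{(x*,z*)}(x) = {z | ⟨x,x*⟩ + ⟨z,z*⟩ < 0}`. -/
def Sopen (x' : X →L[ℝ] ℝ) (z' : Z →L[ℝ] ℝ) (x : X) : Set Z := {z | x' x + z' z < 0}

/-- `S̄_{(x*,z*)}(x) = {z | ⟨x,x*⟩ + ⟨z,z*⟩ ≤ 0}`. -/
def Sclosed (x' : X →L[ℝ] ℝ) (z' : Z →L[ℝ] ℝ) (x : X) : Set Z := {z | x' x + z' z ≤ 0}

/-- Effective domain of a set-valued function. -/
def svDom (f : X → Set Z) : Set X := {x | f x ≠ ∅}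

/-- A set-valued function is proper if its domain is nonempty and no value is all of `Z`. -/
def SVProper (f : X → Set Z) : Prop := svDom f ≠ ∅ ∧ ∀ x, f x ≠ Set.univ

/-- The `K`-epigraph of a set-valued function. -/
def epiK (K : Set Z) (f : X → Set Z) : Set (X × Z) := {p | p.2 ∈ f p.1 + K}

/-- `f` is `K`-e-convex if its `K`-epigraph is e-convex. -/
def IsKEConvex (K : Set Z) (f : X → Set Z) : Prop := IsEConvex (epiK K f)

/-- The `K`-e-convex hull of `f`. -/
def KEco (K : Set Z) (f : X → Set Z) : X → Set Z := fun x => {z | (x, z) ∈ eco (epiK K f)}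

/-- `g` is a (set-valued) minorant of `f`: `g(x) ≤_K f(x)`, i.e. `f(x)+K ⊆ g(x)+K`. -/
def IsMinorant (K : Set Z) (f g : X → Set Z) : Prop := ∀ x, f x + K ⊆ g x + K

/-- A `C`-affine set-valued function. -/
def IsCAffine (K : Set Z) (C : Set X) (a : X → Set Z) : Prop :=
  ∃ x' : X →L[ℝ] ℝ, ∃ z' ∈ negPolar K \ {0}, ∃ zt : Z,
    ∀ x, a x = if x ∈ C then Sopen x' z' x + {zt} else ∅

/-- `M_f = eco (dom f)`. -/
def Mf (f : X → Set Z) : Set X := eco (svDom f)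

/-- The set of all `M_f`-affine minorants of `f`. -/
def Hf (K : Set Z) (f : X → Set Z) : Set (X → Set Z) :=
  {a | IsCAffine K (Mf f) a ∧ IsMinorant K f a}

/-- A 𝒞-affine set-valued function: `C`-affine for some e-convex `C`. -/
def IsCalAffine (K : Set Z) (a : X → Set Z) : Prop :=
  ∃ C : Set X, IsEConvex C ∧ IsCAffine K C a

/-- The set of all 𝒞-affine minorants of `f`. -/
def Cf (K : Set Z) (f : X → Set Z) : Set (X → Set Z) :=
  {a | IsCalAffine K a ∧ IsMinorant K f a}

/-- An e-affine set-valued function. -/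
def IsEAffine (K : Set Z) (a : X → Set Z) : Prop :=
  ∃ x' y' : X →L[ℝ] ℝ, ∃ z' ∈ negPolar K \ {0}, ∃ zt : Z, ∃ α : ℝ,
    ∀ x, a x = if y' x < α then Sopen x' z' x + {zt} else ∅

/-- The set of all e-affine minorants of `f`. -/
def Ef (K : Set Z) (f : X → Set Z) : Set (X → Set Z) :=
  {a | IsEAffine K a ∧ IsMinorant K f a}

/-- The modified negation of a subset of `Z`: `-∅ = Z`, `-Z = ∅`,
and the pointwise negation otherwise. -/
def negSet (A : Set Z) : Set Z :=
  if A = ∅ then Set.univ else if A = Set.univ then ∅ else -A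

/-- The c-conjugate of a set-valued function `f`, defined (by `∅`-extension) on
`X* × X* × Z* × ℝ`; its meaningful domain is `X* × X* × (K*∖{0}) × ℝ`. -/
def cConj (K : Set Z) (f : X → Set Z)
    (w : (X →L[ℝ] ℝ) × (X →L[ℝ] ℝ) × (Z →L[ℝ] ℝ) × ℝ) : Set Z :=
  if w.2.2.1 ∈ negPolar K \ {0} ∧ svDom f ⊆ {x | w.2.1 x < w.2.2.2} then
    negSet (eco (⋃ x : X, (f x + Sclosed w.1 w.2.2.1 (-x))))
  else ∅

/-- The c'-conjugate of `g : X* × X* × Z* × ℝ → 𝒫(Z)`. -/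
def cPrimeConj (g : (X →L[ℝ] ℝ) × (X →L[ℝ] ℝ) × (Z →L[ℝ] ℝ) × ℝ → Set Z)
    (x : X) : Set Z :=
  if ∀ w : (X →L[ℝ] ℝ) × (X →L[ℝ] ℝ) × (Z →L[ℝ] ℝ) × ℝ, g w ≠ ∅ → w.2.1 x < w.2.2.2 then
    ⋂ w ∈ {w : (X →L[ℝ] ℝ) × (X →L[ℝ] ℝ) × (Z →L[ℝ] ℝ) × ℝ | g w ≠ ∅},
      (Sclosed w.1 w.2.2.1 x + negSet (g w))
  else ∅

/-- The support function of the `K`-epigraph of `f` relative to open half-spaces,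
with values in `ℝ ∪ {±∞}`. -/
def sigmaF (K : Set Z) (f : X → Set Z)
    (w : (X →L[ℝ] ℝ) × (X →L[ℝ] ℝ) × (Z →L[ℝ] ℝ) × ℝ) : EReal :=
  if svDom f ⊆ {x | w.2.1 x < w.2.2.2} then
    ⨆ p ∈ epiK K f, ((w.1 p.1 + w.2.2.1 p.2 : ℝ) : EReal)
  else ⊤

/-- `η_C(x*,z*)`: `0` if the supremum of `⟨x,x*⟩+⟨z,z*⟩` over `C` is not attained
(every value is strictly below the supremum), `1` otherwise. -/
def etaSet (C : Set (X × Z)) (x' : X →L[ℝ] ℝ) (z' : Z →L[ℝ] ℝ) : ℕ :=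
  if ∀ p ∈ C, ((x' p.1 + z' p.2 : ℝ) : EReal) < ⨆ q ∈ C, ((x' q.1 + z' q.2 : ℝ) : EReal)
  then 0 else 1


section EConvex

variable {Y W : Type*} [AddCommGroup Y] [Module ℝ Y] [TopologicalSpace Y]
  [AddCommGroup W] [Module ℝ W] [TopologicalSpace W]

theorem IsEConvex.preimage_continuousLinearMap {C : Set Y} (hC : IsEConvex C)
    (L : W →L[ℝ] Y) : IsEConvex (L ⁻¹' C) := by
  obtain ⟨S, rfl⟩ := hC
  refine ⟨(fun p => (p.1.comp L, p.2)) '' S, ?_⟩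
  ext w
  simp only [Set.mem_preimage, Set.mem_iInter₂, Set.forall_mem_image]
  rfl

theorem IsEConvex.preimage_add_const {C : Set Y} (hC : IsEConvex C) (c : Y) :
    IsEConvex ((· + c) ⁻¹' C) := by
  obtain ⟨S, rfl⟩ := hC
  refine ⟨(fun p => (p.1, p.2 - p.1 c)) '' S, ?_⟩
  ext y
  simp only [Set.mem_preimage, Set.mem_iInter₂, Set.forall_mem_image, Set.mem_ofPred_eq,
    map_add, lt_sub_iff_add_lt]

theorem IsEConvex.preimage_prodMk {C : Set (Y × W)} (hC : IsEConvex C) (y : Y) :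
    IsEConvex (Prod.mk y ⁻¹' C) := by
  have hsection : Prod.mk y = (· + (y, 0)) ∘ ContinuousLinearMap.inr ℝ Y W := by
    ext w <;> simp
  rw [hsection, Set.preimage_comp]
  exact (hC.preimage_add_const _).preimage_continuousLinearMap _

end EConvex

theorem stmt0_general (K : Set Z) (f : X → Set Z) (hf : IsKEConvex K f) :
    ∀ x : X, IsEConvex (f x + K) :=
  fun x => hf.preimage_prodMk x

theorem stmt0 [T2Space X] [LocallyConvexSpace ℝ X] [T2Space Z] [LocallyConvexSpace ℝ Z]
    (K : Set Z) (hKconv : Convex ℝ K) (hKcone : ∀ c : ℝ, 0 < c → c • K ⊆ K)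
    (hK0 : ({0} : Set Z) ⊂ K) (hKtop : K ≠ Set.univ)
    (f : X → Set Z) (hf : IsKEConvex K f) :
    ∀ x : X, IsEConvex (f x + K) :=
  stmt0_general K f hf

end
end

section
/- For any nonempty subsets A and B of Z, eco(A + eco B) = eco(A + B), where + denotes the Minkowski sum. -/
open scoped Classical Pointwise
noncomputable section

variable {X : Type*} [AddCommGroup X] [Module ℝ X] [TopologicalSpace X]
  [IsTopologicalAddGroup X] [ContinuousSMul ℝ X]
variable {Z : Type*} [AddCommGroup Z] [Module ℝ Z] [TopologicalSpace Z]
  [IsTopologicalAddGroup Z] [ContinuousSMul ℝ Z]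

section EvenConvexity

variable {Y : Type*} [AddCommGroup Y] [Module ℝ Y] [TopologicalSpace Y]

/-- The family of all open half-spaces containing `⋂₀ F` cuts out exactly `⋂₀ F`. -/
theorem isEConvex_sInter {F : Set (Set Y)} (hF : ∀ D ∈ F, IsEConvex D) :
    IsEConvex (⋂₀ F) := by
  refine ⟨{p | ⋂₀ F ⊆ {y | p.1 y < p.2}}, Set.Subset.antisymm
    (fun y hy => Set.mem_iInter₂.mpr fun p hp => hp hy) fun y hy D hD => ?_⟩
  obtain ⟨S, rfl⟩ := hF D hD
  refine Set.mem_iInter₂.mpr fun p hp => Set.mem_iInter₂.mp hy p fun z hz => ?_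
  exact Set.mem_iInter₂.mp (Set.sInter_subset_of_mem hD hz) p hp

theorem isEConvex_eco (C : Set Y) : IsEConvex (eco C) :=
  isEConvex_sInter fun _ hD => hD.1

theorem subset_eco (C : Set Y) : C ⊆ eco C :=
  fun _ hy _ hD => hD.2 hy

theorem eco_subset_of_subset {C D : Set Y} (hD : IsEConvex D) (hCD : C ⊆ D) : eco C ⊆ D :=
  fun _ hy => hy D ⟨hD, hCD⟩

theorem eco_mono {C D : Set Y} (h : C ⊆ D) : eco C ⊆ eco D :=
  eco_subset_of_subset (isEConvex_eco D) (h.trans (subset_eco D))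

theorem IsEConvex.preimage_add_left {D : Set Y} (hD : IsEConvex D) (a : Y) :
    IsEConvex ((a + ·) ⁻¹' D) := by
  obtain ⟨S, rfl⟩ := hD
  refine ⟨(fun p => (p.1, p.2 - p.1 a)) '' S, ?_⟩
  ext z
  simp only [Set.mem_preimage, Set.mem_iInter, Set.forall_mem_image, Set.mem_ofPred_eq, map_add]
  exact forall₂_congr fun p _ => by constructor <;> intro h <;> linarith

/-- Translates of e-convex sets are e-convex, so `eco B ⊆ eco (A + B) - a` for every `a ∈ A`. -/
theorem add_eco_subset_eco_add (A B : Set Y) : A + eco B ⊆ eco (A + B) := by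
  rintro _ ⟨a, ha, z, hz, rfl⟩
  refine eco_subset_of_subset ((isEConvex_eco (A + B)).preimage_add_left a) ?_ hz
  exact fun b hb => subset_eco (A + B) (Set.add_mem_add ha hb)

end EvenConvexity

theorem stmt1_general
    (A B : Set Z) :
    eco (A + eco B) = eco (A + B) :=
  Set.Subset.antisymm
    (eco_subset_of_subset (isEConvex_eco (A + B)) (add_eco_subset_eco_add A B))
    (eco_mono (Set.add_subset_add_left (subset_eco B)))

theorem stmt1 [T2Space Z] [LocallyConvexSpace ℝ Z]
    (A B : Set Z) (hA : A.Nonempty) (hB : B.Nonempty) :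
    eco (A + eco B) = eco (A + B) :=
  stmt1_general A B

end
end

section
/- Let C ⊆ X and let a : X → 𝒫(Z) be a C-affine set-valued function. If C is e-convex, then a is K-e-convex; moreover in this case a(x) = eco(a(x)+K) for every x ∈ X. -/
open scoped Classical Pointwise
noncomputable section

variable {X : Type*} [AddCommGroup X] [Module ℝ X] [TopologicalSpace X]
  [IsTopologicalAddGroup X] [ContinuousSMul ℝ X]
variable {Z : Type*} [AddCommGroup Z] [Module ℝ Z] [TopologicalSpace Z]
  [IsTopologicalAddGroup Z] [ContinuousSMul ℝ Z]

/-!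
Because `z* ∈ K*`, adding `K` to the open half-space `S_{(x*,z*)}(x) + z̃` does not enlarge it.
Hence every value `a x` is an open half-space or empty, and `epi_K a` is the cylinder `C × Z`
cut by a single open half-space of `X × Z`; both are e-convex once `C` is.
-/

namespace IsEConvex

variable {E F : Type*} [AddCommGroup E] [Module ℝ E] [TopologicalSpace E]
  [AddCommGroup F] [Module ℝ F] [TopologicalSpace F]

theorem empty : IsEConvex (∅ : Set E) :=
  ⟨{(0, -1)}, by ext; simp⟩

theorem setOf_lt (f : E →L[ℝ] ℝ) (c : ℝ) : IsEConvex {y | f y < c} :=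
  ⟨{(f, c)}, by simp⟩

theorem inter {s t : Set E} (hs : IsEConvex s) (ht : IsEConvex t) : IsEConvex (s ∩ t) := by
  obtain ⟨S, rfl⟩ := hs
  obtain ⟨T, rfl⟩ := ht
  exact ⟨S ∪ T, by rw [Set.biInter_union]⟩

theorem preimage {s : Set F} (hs : IsEConvex s) (L : E →L[ℝ] F) : IsEConvex (L ⁻¹' s) := by
  obtain ⟨S, rfl⟩ := hs
  refine ⟨(fun p => (p.1.comp L, p.2)) '' S, ?_⟩
  ext y
  simp only [Set.mem_preimage, Set.mem_iInter, Set.mem_ofPred_eq, Set.forall_mem_image]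
  rfl

theorem eco_eq {s : Set E} (hs : IsEConvex s) : eco s = s :=
  (Set.sInter_subset_of_mem (show s ∈ {t | IsEConvex t ∧ s ⊆ t} from ⟨hs, subset_rfl⟩)).antisymm
    (Set.subset_sInter fun _ ht => ht.2)

end IsEConvex

section CAffine

variable {E F : Type*} [AddCommGroup E] [Module ℝ E] [TopologicalSpace E]
  [AddCommGroup F] [Module ℝ F] [TopologicalSpace F]

theorem sopen_add_singleton (x' : E →L[ℝ] ℝ) (z' : F →L[ℝ] ℝ) (x : E) (zt : F) :
    Sopen x' z' x + {zt} = {z | z' z < z' zt - x' x} := by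
  ext z
  simp only [Set.add_singleton, Set.image_add_right, Set.mem_preimage, Sopen, Set.mem_ofPred_eq,
    map_add, map_neg]
  constructor <;> intro h <;> linarith

theorem setOf_lt_add_eq_of_mem_negPolar {K : Set F} (hK : (0 : F) ∈ K) {z' : F →L[ℝ] ℝ} (hz' : z' ∈ negPolar K)
    (r : ℝ) : {z | z' z < r} + K = {z | z' z < r} := by
  refine (Set.add_subset_iff.2 fun z hz k hk => ?_).antisymm (Set.subset_add_left _ hK)
  simp only [Set.mem_ofPred_eq, map_add] at hz ⊢
  linarith [hz' k hk]

variable {K : Set F} {C : Set E} {a : E → Set F}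

theorem IsCAffine.exists_eq_ite (haff : IsCAffine K C a) :
    ∃ x' : E →L[ℝ] ℝ, ∃ z' ∈ negPolar K, ∃ zt : F,
      ∀ x, a x = if x ∈ C then {z | z' z < z' zt - x' x} else ∅ := by
  obtain ⟨x', z', hz', zt, ha⟩ := haff
  exact ⟨x', z', hz'.1, zt, fun x => by rw [ha, sopen_add_singleton]⟩

theorem IsCAffine.add_eq (haff : IsCAffine K C a) (hK : (0 : F) ∈ K) (x : E) : a x + K = a x := by
  obtain ⟨x', z', hz', zt, ha⟩ := haff.exists_eq_ite
  rw [ha]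
  split_ifs
  · exact setOf_lt_add_eq_of_mem_negPolar hK hz' _
  · exact Set.empty_add

theorem IsCAffine.isEConvex_apply (haff : IsCAffine K C a) (x : E) : IsEConvex (a x) := by
  obtain ⟨x', z', -, zt, ha⟩ := haff.exists_eq_ite
  rw [ha]
  split_ifs
  · exact .setOf_lt _ _
  · exact .empty

theorem IsCAffine.isKEConvex (haff : IsCAffine K C a) (hK : (0 : F) ∈ K) (hC : IsEConvex C) :
    IsKEConvex K a := by
  obtain ⟨x', z', -, zt, ha⟩ := haff.exists_eq_ite
  have hepi : epiK K a = Prod.fst ⁻¹' C ∩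
      {p | (x'.comp (.fst ℝ E F) + z'.comp (.snd ℝ E F)) p < z' zt} := by
    ext ⟨x, z⟩
    simp only [epiK, Set.mem_ofPred_eq]
    rw [haff.add_eq hK, ha]
    split_ifs <;> simp [*, lt_sub_iff_add_lt']
  rw [IsKEConvex, hepi]
  exact (hC.preimage (.fst ℝ E F)).inter (.setOf_lt _ _)

end CAffine

theorem stmt3_general (K : Set Z) (hK0 : ({0} : Set Z) ⊂ K)
    (C : Set X) (a : X → Set Z) (haff : IsCAffine K C a) (hC : IsEConvex C) :
    IsKEConvex K a ∧ ∀ x : X, a x = eco (a x + K) := by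
  have hK : (0 : Z) ∈ K := hK0.1 rfl
  exact ⟨haff.isKEConvex hK hC, fun x => by
    rw [haff.add_eq hK, (haff.isEConvex_apply x).eco_eq]⟩

theorem stmt3 [T2Space X] [LocallyConvexSpace ℝ X] [T2Space Z] [LocallyConvexSpace ℝ Z]
    (K : Set Z) (hKconv : Convex ℝ K) (hKcone : ∀ c : ℝ, 0 < c → c • K ⊆ K)
    (hK0 : ({0} : Set Z) ⊂ K) (hKtop : K ≠ Set.univ)
    (C : Set X) (a : X → Set Z) (haff : IsCAffine K C a) (hC : IsEConvex C) :
    IsKEConvex K a ∧ ∀ x : X, a x = eco (a x + K) :=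
  stmt3_general K hK0 C a haff hC

end
end

section
/- Let f : X → 𝒫(Z) be a set-valued function. For every (x*, y*, z*, α) ∈ X*×X*×(K*∖{0})×ℝ: −f^c(x*,y*,z*,α) = {z ∈ Z : ⟨z,z*⟩ < σ_f(x*,y*,z*,α)} if η_{epi_K f}(x*,z*) = 0, and −f^c(x*,y*,z*,α) = {z ∈ Z : ⟨z,z*⟩ ≤ σ_f(x*,y*,z*,α)} if η_{epi_K f}(x*,z*) = 1 (the inequalities read in ℝ∪{±∞}). Consequently, f^c(x*,y*,z*,α) ≠ ∅ if and only if σ_f(x*,y*,z*,α) < +∞, i.e., dom f^c = dom σ_f. -/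
open scoped Classical Pointwise
noncomputable section

variable {X : Type*} [AddCommGroup X] [Module ℝ X] [TopologicalSpace X]
  [IsTopologicalAddGroup X] [ContinuousSMul ℝ X]
variable {Z : Type*} [AddCommGroup Z] [Module ℝ Z] [TopologicalSpace Z]
  [IsTopologicalAddGroup Z] [ContinuousSMul ℝ Z]

/-!
Since `0 ∈ K` and `z*` is nonpositive on `K`, a point `z` lies in `⋃ₓ (f x + S̄_{(x*,z*)}(-x))`
exactly when `⟨z,z*⟩ ≤ ⟨x,x*⟩ + ⟨u,z*⟩` for some `(x,u) ∈ epi_K f`. This union is therefore the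
open or the closed sublevel set of `z*` at height `σ_f`, according to whether the supremum is
attained, so it is already evenly convex (possibly `∅` or `Z`), and the two negations in
`−f^c` cancel. As `z* ≠ 0` is onto `ℝ`, either sublevel set is all of `Z` only when `σ_f = +∞`.
-/

section HalfSpace

variable {Y : Type*} [AddCommGroup Y] [Module ℝ Y] [TopologicalSpace Y]

lemma IsEConvex.eco_eq_s13 {C : Set Y} (h : IsEConvex C) : eco C = C :=
  subset_antisymm (Set.sInter_subset_of_mem ⟨h, subset_rfl⟩) (Set.subset_sInter fun _ hD ↦ hD.2)

lemma isEConvex_empty : IsEConvex (∅ : Set Y) :=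
  ⟨{(0, 0)}, by ext; simp⟩

lemma isEConvex_univ : IsEConvex (Set.univ : Set Y) :=
  ⟨∅, by simp⟩

lemma isEConvex_setOf_lt (φ : Y →L[ℝ] ℝ) (c : ℝ) : IsEConvex {y | φ y < c} :=
  ⟨{(φ, c)}, by ext; simp⟩

lemma isEConvex_setOf_le (φ : Y →L[ℝ] ℝ) (c : ℝ) : IsEConvex {y | φ y ≤ c} := by
  refine ⟨(φ, ·) '' Set.Ioi c, ?_⟩
  ext y
  simp only [Set.mem_ofPred_eq, Set.mem_iInter, Set.mem_image, Set.mem_Ioi]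
  refine ⟨fun h _ ⟨b, hb, hp⟩ ↦ hp ▸ h.trans_lt hb, fun h ↦ ?_⟩
  by_contra! hlt
  exact lt_irrefl _ (h (φ, φ y) ⟨φ y, hlt, rfl⟩)

lemma isEConvex_setOf_coe_lt (φ : Y →L[ℝ] ℝ) (S : EReal) :
    IsEConvex {y | (φ y : EReal) < S} := by
  induction S using EReal.rec with
  | bot => simpa using isEConvex_empty
  | coe c => simpa using isEConvex_setOf_lt φ c
  | top => simpa using isEConvex_univ

lemma isEConvex_setOf_coe_le (φ : Y →L[ℝ] ℝ) (S : EReal) :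
    IsEConvex {y | (φ y : EReal) ≤ S} := by
  induction S using EReal.rec with
  | bot => simpa using isEConvex_empty
  | coe c => simpa using isEConvex_setOf_le φ c
  | top => simpa using isEConvex_univ

lemma exists_coe_apply_gt {φ : Y →L[ℝ] ℝ} (hφ : φ ≠ 0) {S : EReal} (hS : S ≠ ⊤) :
    ∃ y, S < φ y := by
  obtain ⟨r, hr, -⟩ := EReal.exists_between_coe_real (lt_top_iff_ne_top.2 hS)
  have hφ' : (φ : Y →ₗ[ℝ] ℝ) ≠ 0 := fun h ↦ hφ (ContinuousLinearMap.coe_injective h)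
  obtain ⟨y, rfl⟩ := LinearMap.surjective_of_ne_zero hφ' r
  exact ⟨y, hr⟩

lemma setOf_coe_lt_eq_univ_iff {φ : Y →L[ℝ] ℝ} (hφ : φ ≠ 0) {S : EReal} :
    {y | (φ y : EReal) < S} = Set.univ ↔ S = ⊤ := by
  refine ⟨fun h ↦ by_contra fun hS ↦ ?_, fun h ↦ by simp [h]⟩
  obtain ⟨y, hy⟩ := exists_coe_apply_gt hφ hS
  exact hy.not_gt (Set.eq_univ_iff_forall.1 h y)

lemma setOf_coe_le_eq_univ_iff {φ : Y →L[ℝ] ℝ} (hφ : φ ≠ 0) {S : EReal} :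
    {y | (φ y : EReal) ≤ S} = Set.univ ↔ S = ⊤ := by
  refine ⟨fun h ↦ by_contra fun hS ↦ ?_, fun h ↦ by simp [h]⟩
  obtain ⟨y, hy⟩ := exists_coe_apply_gt hφ hS
  exact hy.not_ge (Set.eq_univ_iff_forall.1 h y)

end HalfSpace

section NegSet

variable {V : Type*} [AddCommGroup V]

lemma negSet_empty : negSet (∅ : Set V) = Set.univ := by
  simp [negSet]

lemma negSet_negSet (A : Set V) : negSet (negSet A) = A := by
  unfold negSet
  split_ifs <;> simp_all [neg_eq_iff_eq_neg]

lemma negSet_eq_univ_iff {A : Set V} : negSet A = Set.univ ↔ A = ∅ := by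
  rw [← negSet_empty, (Function.LeftInverse.injective negSet_negSet).eq_iff]

end NegSet

section BiSup

variable {ι : Type*} {C : Set ι} {g : ι → ℝ} {t : ℝ}

lemma exists_le_iff_coe_lt_biSup (hC : ∀ p ∈ C, (g p : EReal) < ⨆ q ∈ C, (g q : EReal)) :
    (∃ p ∈ C, t ≤ g p) ↔ (t : EReal) < ⨆ q ∈ C, (g q : EReal) := by
  refine ⟨fun ⟨p, hp, h⟩ ↦ (EReal.coe_le_coe_iff.2 h).trans_lt (hC p hp), fun h ↦ ?_⟩
  obtain ⟨p, hp, h⟩ := lt_biSup_iff.1 h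
  exact ⟨p, hp, (EReal.coe_lt_coe_iff.1 h).le⟩

lemma exists_le_iff_coe_le_biSup (hC : ¬ ∀ p ∈ C, (g p : EReal) < ⨆ q ∈ C, (g q : EReal)) :
    (∃ p ∈ C, t ≤ g p) ↔ (t : EReal) ≤ ⨆ q ∈ C, (g q : EReal) := by
  push Not at hC
  obtain ⟨p₀, hp₀, hmax⟩ := hC
  refine ⟨fun ⟨p, hp, h⟩ ↦ ?_, fun h ↦ ⟨p₀, hp₀, EReal.coe_le_coe_iff.1 (h.trans hmax)⟩⟩
  exact (EReal.coe_le_coe_iff.2 h).trans (le_biSup (fun q ↦ (g q : EReal)) hp)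

end BiSup

section Conjugate

variable {E F : Type*} [AddCommGroup E] [Module ℝ E] [TopologicalSpace E]
  [AddCommGroup F] [Module ℝ F] [TopologicalSpace F]
  {K : Set F} {f : E → Set F} {x' y' : E →L[ℝ] ℝ} {z' : F →L[ℝ] ℝ} {α : ℝ}

lemma etaSet_eq_zero_iff {C : Set (E × F)} :
    etaSet C x' z' = 0 ↔ ∀ p ∈ C,
      ((x' p.1 + z' p.2 : ℝ) : EReal) < ⨆ q ∈ C, ((x' q.1 + z' q.2 : ℝ) : EReal) := by
  rw [etaSet]
  split_ifs with h
  exacts [iff_of_true (by simp) h, iff_of_false (by simp) h]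

lemma etaSet_eq_one_iff {C : Set (E × F)} :
    etaSet C x' z' = 1 ↔ ¬ ∀ p ∈ C,
      ((x' p.1 + z' p.2 : ℝ) : EReal) < ⨆ q ∈ C, ((x' q.1 + z' q.2 : ℝ) : EReal) := by
  rw [etaSet]
  split_ifs with h
  exacts [iff_of_false (by simp) (not_not_intro h), iff_of_true (by simp) h]

lemma etaSet_eq_zero_or_one (C : Set (E × F)) :
    etaSet C x' z' = 0 ∨ etaSet C x' z' = 1 := by
  unfold etaSet
  split_ifs <;> simp

lemma mem_iUnion_add_Sclosed_iff (hK0 : (0 : F) ∈ K) (hz' : z' ∈ negPolar K) {z : F} :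
    z ∈ ⋃ x, (f x + Sclosed x' z' (-x)) ↔ ∃ p ∈ epiK K f, z' z ≤ x' p.1 + z' p.2 := by
  simp only [Set.mem_iUnion, Set.mem_add, Sclosed, Set.mem_ofPred_eq, map_neg]
  constructor
  · rintro ⟨x, u, hu, s, hs, rfl⟩
    refine ⟨(x, u), ⟨u, hu, 0, hK0, add_zero u⟩, ?_⟩
    rw [map_add]
    linarith
  · rintro ⟨⟨x, v⟩, ⟨u, hu, k, hk, rfl⟩, hle⟩
    refine ⟨x, u, hu, z - u, ?_, add_sub_cancel u z⟩
    have := hz' k hk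
    simp only [map_add, map_sub] at hle ⊢
    linarith

lemma iUnion_add_Sclosed_eq_setOf_lt (hK0 : (0 : F) ∈ K) (hz' : z' ∈ negPolar K)
    (hη : etaSet (epiK K f) x' z' = 0) :
    ⋃ x, (f x + Sclosed x' z' (-x)) =
      {z | (z' z : EReal) < ⨆ p ∈ epiK K f, ((x' p.1 + z' p.2 : ℝ) : EReal)} := by
  ext z
  exact (mem_iUnion_add_Sclosed_iff hK0 hz').trans
    (exists_le_iff_coe_lt_biSup (etaSet_eq_zero_iff.1 hη))

lemma iUnion_add_Sclosed_eq_setOf_le (hK0 : (0 : F) ∈ K) (hz' : z' ∈ negPolar K)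
    (hη : etaSet (epiK K f) x' z' = 1) :
    ⋃ x, (f x + Sclosed x' z' (-x)) =
      {z | (z' z : EReal) ≤ ⨆ p ∈ epiK K f, ((x' p.1 + z' p.2 : ℝ) : EReal)} := by
  ext z
  exact (mem_iUnion_add_Sclosed_iff hK0 hz').trans
    (exists_le_iff_coe_le_biSup (etaSet_eq_one_iff.1 hη))

lemma negSet_cConj_of_subset (hz' : z' ∈ negPolar K \ {0}) (hdom : svDom f ⊆ {x | y' x < α}) :
    negSet (cConj K f (x', y', z', α)) = eco (⋃ x, (f x + Sclosed x' z' (-x))) := by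
  rw [cConj, if_pos ⟨hz', hdom⟩, negSet_negSet]

lemma negSet_cConj_of_not_subset (hdom : ¬ svDom f ⊆ {x | y' x < α}) :
    negSet (cConj K f (x', y', z', α)) = Set.univ := by
  rw [cConj, if_neg fun h ↦ hdom h.2, negSet_empty]

theorem negSet_cConj_eq_setOf_lt (hK0 : (0 : F) ∈ K) (hz' : z' ∈ negPolar K \ {0})
    (hη : etaSet (epiK K f) x' z' = 0) :
    negSet (cConj K f (x', y', z', α)) = {z | (z' z : EReal) < sigmaF K f (x', y', z', α)} := by
  by_cases hdom : svDom f ⊆ {x | y' x < α}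
  · rw [negSet_cConj_of_subset hz' hdom, iUnion_add_Sclosed_eq_setOf_lt hK0 hz'.1 hη,
      (isEConvex_setOf_coe_lt z' _).eco_eq_s13, sigmaF, if_pos hdom]
  · rw [negSet_cConj_of_not_subset hdom, sigmaF, if_neg hdom]
    simp

theorem negSet_cConj_eq_setOf_le (hK0 : (0 : F) ∈ K) (hz' : z' ∈ negPolar K \ {0})
    (hη : etaSet (epiK K f) x' z' = 1) :
    negSet (cConj K f (x', y', z', α)) = {z | (z' z : EReal) ≤ sigmaF K f (x', y', z', α)} := by
  by_cases hdom : svDom f ⊆ {x | y' x < α}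
  · rw [negSet_cConj_of_subset hz' hdom, iUnion_add_Sclosed_eq_setOf_le hK0 hz'.1 hη,
      (isEConvex_setOf_coe_le z' _).eco_eq_s13, sigmaF, if_pos hdom]
  · rw [negSet_cConj_of_not_subset hdom, sigmaF, if_neg hdom]
    simp

end Conjugate

theorem stmt13_general (K : Set Z) (hK0 : ({0} : Set Z) ⊂ K)
    (f : X → Set Z) (x' y' : X →L[ℝ] ℝ) (z' : Z →L[ℝ] ℝ) (α : ℝ)
    (hz' : z' ∈ negPolar K \ {0}) :
    (etaSet (epiK K f) x' z' = 0 →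
      negSet (cConj K f (x', y', z', α)) =
        {z : Z | ((z' z : ℝ) : EReal) < sigmaF K f (x', y', z', α)}) ∧
    (etaSet (epiK K f) x' z' = 1 →
      negSet (cConj K f (x', y', z', α)) =
        {z : Z | ((z' z : ℝ) : EReal) ≤ sigmaF K f (x', y', z', α)}) ∧
    (cConj K f (x', y', z', α) ≠ ∅ ↔ sigmaF K f (x', y', z', α) < ⊤) := by
  have h0K : (0 : Z) ∈ K := hK0.1 rfl
  have hlt := negSet_cConj_eq_setOf_lt (f := f) (x' := x') (y' := y') (α := α) h0K hz'
  have hle := negSet_cConj_eq_setOf_le (f := f) (x' := x') (y' := y') (α := α) h0K hz'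
  refine ⟨hlt, hle, ?_⟩
  rw [Ne, ← negSet_eq_univ_iff, lt_top_iff_ne_top, not_iff_not]
  rcases etaSet_eq_zero_or_one (x' := x') (z' := z') (epiK K f) with hη | hη
  · rw [hlt hη, setOf_coe_lt_eq_univ_iff hz'.2]
  · rw [hle hη, setOf_coe_le_eq_univ_iff hz'.2]

theorem stmt13 [T2Space X] [LocallyConvexSpace ℝ X] [T2Space Z] [LocallyConvexSpace ℝ Z]
    (K : Set Z) (hKconv : Convex ℝ K) (hKcone : ∀ c : ℝ, 0 < c → c • K ⊆ K)
    (hK0 : ({0} : Set Z) ⊂ K) (hKtop : K ≠ Set.univ)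
    (f : X → Set Z) (x' y' : X →L[ℝ] ℝ) (z' : Z →L[ℝ] ℝ) (α : ℝ)
    (hz' : z' ∈ negPolar K \ {0}) :
    (etaSet (epiK K f) x' z' = 0 →
      negSet (cConj K f (x', y', z', α)) =
        {z : Z | ((z' z : ℝ) : EReal) < sigmaF K f (x', y', z', α)}) ∧
    (etaSet (epiK K f) x' z' = 1 →
      negSet (cConj K f (x', y', z', α)) =
        {z : Z | ((z' z : ℝ) : EReal) ≤ sigmaF K f (x', y', z', α)}) ∧
    (cConj K f (x', y', z', α) ≠ ∅ ↔ sigmaF K f (x', y', z', α) < ⊤) :=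
  stmt13_general K hK0 f x' y' z' α hz'
end
end

section
/- Let C ⊆ X and D ⊆ Z be nonempty sets. Then C and D are both e-convex if and only if the product C × D is an e-convex subset of X × Z (with the product topology). -/
open scoped Classical Pointwise
noncomputable section

variable {X : Type*} [AddCommGroup X] [Module ℝ X] [TopologicalSpace X]
  [IsTopologicalAddGroup X] [ContinuousSMul ℝ X]
variable {Z : Type*} [AddCommGroup Z] [Module ℝ Z] [TopologicalSpace Z]
  [IsTopologicalAddGroup Z] [ContinuousSMul ℝ Z]

/-! E-convex sets are closed under intersections and under preimages by continuous affine
maps, because such a preimage of an open half-space is again an open half-space. Hence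
`C ×ˢ D = fst⁻¹' C ∩ snd⁻¹' D` is e-convex, and conversely, for any `d₀ ∈ D`, `C` is the
preimage of `C ×ˢ D` under the affine map `x ↦ (x, d₀)`. -/

namespace IsEConvex

variable {Y W : Type*} [AddCommGroup Y] [Module ℝ Y] [TopologicalSpace Y]
  [AddCommGroup W] [Module ℝ W] [TopologicalSpace W]

theorem inter_s19 {A B : Set Y} (hA : IsEConvex A) (hB : IsEConvex B) : IsEConvex (A ∩ B) := by
  obtain ⟨S, rfl⟩ := hA
  obtain ⟨T, rfl⟩ := hB
  exact ⟨S ∪ T, (Set.biInter_union S T _).symm⟩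

theorem preimage_continuousLinearMap_s19 {A : Set W} (hA : IsEConvex A) (f : Y →L[ℝ] W) :
    IsEConvex (f ⁻¹' A) := by
  obtain ⟨S, rfl⟩ := hA
  refine ⟨(fun p => (p.1.comp f, p.2)) '' S, ?_⟩
  rw [Set.biInter_image, Set.preimage_iInter₂]
  rfl

theorem preimage_add_const_s19 {A : Set Y} (hA : IsEConvex A) (b : Y) :
    IsEConvex ((· + b) ⁻¹' A) := by
  obtain ⟨S, rfl⟩ := hA
  refine ⟨(fun p => (p.1, p.2 - p.1 b)) '' S, ?_⟩
  rw [Set.biInter_image, Set.preimage_iInter₂]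
  ext y
  simp [lt_sub_iff_add_lt]

theorem prod {A : Set Y} {B : Set W} (hA : IsEConvex A) (hB : IsEConvex B) :
    IsEConvex (A ×ˢ B) :=
  Set.prod_eq A B ▸ (hA.preimage_continuousLinearMap_s19 (.fst ℝ Y W)).inter_s19
    (hB.preimage_continuousLinearMap_s19 (.snd ℝ Y W))

theorem of_prod_left {A : Set Y} {B : Set W} (h : IsEConvex (A ×ˢ B)) (hB : B.Nonempty) :
    IsEConvex A := by
  obtain ⟨b, hb⟩ := hB
  have hslice : (fun y => (y, b)) = (· + (0, b)) ∘ ContinuousLinearMap.inl ℝ Y W := by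
    ext <;> simp
  rw [← Set.mk_preimage_prod_left (s := A) hb, hslice, Set.preimage_comp]
  exact (h.preimage_add_const_s19 _).preimage_continuousLinearMap_s19 _

theorem of_prod_right {A : Set Y} {B : Set W} (h : IsEConvex (A ×ˢ B)) (hA : A.Nonempty) :
    IsEConvex B := by
  obtain ⟨a, ha⟩ := hA
  have hslice : Prod.mk a = (· + (a, 0)) ∘ ContinuousLinearMap.inr ℝ Y W := by
    ext <;> simp
  rw [← Set.mk_preimage_prod_right (t := B) ha, hslice, Set.preimage_comp]
  exact (h.preimage_add_const_s19 _).preimage_continuousLinearMap_s19 _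

end IsEConvex

theorem stmt19_general (C : Set X) (D : Set Z) (hC : C.Nonempty) (hD : D.Nonempty) :
    (IsEConvex C ∧ IsEConvex D) ↔ IsEConvex (C ×ˢ D) :=
  ⟨fun ⟨hC', hD'⟩ => hC'.prod hD', fun h => ⟨h.of_prod_left hD, h.of_prod_right hC⟩⟩

theorem stmt19 [T2Space X] [LocallyConvexSpace ℝ X] [T2Space Z] [LocallyConvexSpace ℝ Z]
    (C : Set X) (D : Set Z) (hC : C.Nonempty) (hD : D.Nonempty) :
    (IsEConvex C ∧ IsEConvex D) ↔ IsEConvex (C ×ˢ D) :=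
  stmt19_general C D hC hD

end
end
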